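/- arXiv:2002.11232 — 3 statements merged into one kernel-verified Lean document; each statement's English description precedes it below -/
import Mathlib

section
/- Let H be a central subgroup of a group G such that G admits an H-filtration {G_α} (a family of finite-index normal subgroups with trivial intersection and ⋂_α H·G_α = H). Set H_α := G_α ∩ H. Then for every subgroup N ≤ H containing some H_{α₀}, the family {G_α} is an N-filtration, i.e. ⋂_α N·G_α = N; consequently G/N is residually finite. -/
/-!
Since `H` is central, `N ≤ H` is normal. Every `g ∈ ⋂ α, N·G_α` lies in `⋂ α, H·G_α = H`
and in `N·G_{α₀}`, so by the modular law it lies in `N·(G_{α₀} ∩ H) = N`. The subgroups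
`N·G_α` are then finite-index normal subgroups containing `N` with intersection `N`, and their
images in `G/N` separate every nontrivial element from `1`.
-/

/-- A group is residually finite if every nontrivial element is avoided by some
finite-index normal subgroup. -/
def ResiduallyFinite (G : Type*) [Group G] : Prop :=
  ∀ g : G, g ≠ 1 → ∃ N : Subgroup G, N.Normal ∧ N.FiniteIndex ∧ g ∉ N

theorem normal_of_le_center' {G : Type*} [Group G] (N : Subgroup G)
    (h : N ≤ Subgroup.center G) : N.Normal :=
  ⟨fun n hn g => by
    have hc := Subgroup.mem_center_iff.mp (h hn) g
    rwa [hc, mul_inv_cancel_right]⟩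

namespace Subgroup

open scoped Pointwise

variable {G : Type*} [Group G]

theorem sup_inf_le_sup_inf_of_le {N K H : Subgroup G} [K.Normal] (hNH : N ≤ H) :
    (N ⊔ K) ⊓ H ≤ N ⊔ K ⊓ H := by
  intro g hg
  have hg' : g ∈ (N : Set G) * ((K ⊓ H : Subgroup G) : Set G) := by
    rw [mul_inf_assoc N K H hNH, ← mul_normal]
    exact hg
  obtain ⟨n, hn, k, hk, rfl⟩ := hg'
  exact mul_mem_sup hn hk

theorem iInf_sup_eq_of_iInf_sup_eq {ι : Type*} {H N : Subgroup G} {K : ι → Subgroup G}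
    (hfil : ⨅ i, (H ⊔ K i) = H) (hNH : N ≤ H) (i₀ : ι) [(K i₀).Normal]
    (hi₀ : K i₀ ⊓ H ≤ N) : ⨅ i, (N ⊔ K i) = N := by
  refine le_antisymm ?_ (le_iInf fun _ => le_sup_left)
  calc ⨅ i, (N ⊔ K i)
      ≤ (N ⊔ K i₀) ⊓ ⨅ i, (H ⊔ K i) :=
        le_inf (iInf_le _ i₀) (iInf_mono fun i => sup_le_sup_right hNH _)
    _ = (N ⊔ K i₀) ⊓ H := by rw [hfil]
    _ ≤ N ⊔ K i₀ ⊓ H := sup_inf_le_sup_inf_of_le hNH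
    _ = N := sup_eq_left.mpr hi₀

end Subgroup

theorem residuallyFinite_quotient_of_iInf_eq {G : Type*} [Group G] (N : Subgroup G) [N.Normal]
    {ι : Type*} {M : ι → Subgroup G} (hnorm : ∀ i, (M i).Normal)
    (hfi : ∀ i, (M i).FiniteIndex) (hle : ∀ i, N ≤ M i) (hinf : ⨅ i, M i = N) :
    ResiduallyFinite (G ⧸ N) := by
  intro x hx
  obtain ⟨g, rfl⟩ := QuotientGroup.mk_surjective x
  have hg : g ∉ ⨅ i, M i := by rwa [hinf, ← QuotientGroup.eq_one_iff]
  obtain ⟨i, hi⟩ : ∃ i, g ∉ M i := by simpa only [Subgroup.mem_iInf, not_forall] using hg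
  have hker : (QuotientGroup.mk' N).ker ≤ M i := by rw [QuotientGroup.ker_mk']; exact hle i
  have hsurj := QuotientGroup.mk'_surjective N
  refine ⟨(M i).map (QuotientGroup.mk' N), (hnorm i).map _ hsurj, ⟨?_⟩, fun hgi => hi ?_⟩
  · rw [Subgroup.index_map_eq _ hsurj hker]
    exact (hfi i).index_ne_zero
  · rw [← Subgroup.comap_map_eq_self hker, Subgroup.mem_comap]
    exact hgi

theorem statement1_general {G : Type*} [Group G] (H : Subgroup G) (hcent : H ≤ Subgroup.center G)
    {ι : Type*} (Gα : ι → Subgroup G)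
    (hnorm : ∀ α, (Gα α).Normal) (hfi : ∀ α, (Gα α).FiniteIndex)
    (hfil : ⨅ α, (H ⊔ Gα α) = H)
    (N : Subgroup G) (hNH : N ≤ H) (α₀ : ι) (hα₀ : Gα α₀ ⊓ H ≤ N) :
    (⨅ α, (N ⊔ Gα α)) = N ∧
      (letI : N.Normal := normal_of_le_center' N (hNH.trans hcent)
       ResiduallyFinite (G ⧸ N)) := by
  have hN : N.Normal := normal_of_le_center' N (hNH.trans hcent)
  have hfilN : ⨅ α, (N ⊔ Gα α) = N :=
    have := hnorm α₀
    Subgroup.iInf_sup_eq_of_iInf_sup_eq hfil hNH α₀ hα₀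
  refine ⟨hfilN, residuallyFinite_quotient_of_iInf_eq N (fun α => ?_) (fun α => ?_)
    (fun _ => le_sup_left) hfilN⟩
  · have := hnorm α
    exact Subgroup.sup_normal N (Gα α)
  · have := hfi α
    exact Subgroup.finiteIndex_of_le le_sup_right

/-- if `H` is central in `G` and `{G α}` is an `H`-filtration (finite-index
normal subgroups with trivial intersection and `⋂ α, H·G α = H`), then for every subgroup
`N ≤ H` containing some `H α₀ = G α₀ ∩ H`, the family `{G α}` is an `N`-filtration, i.e.
`⋂ α, N·G α = N`; consequently `G/N` is residually finite. -/
theorem statement1 {G : Type*} [Group G] (H : Subgroup G) (hcent : H ≤ Subgroup.center G)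
    {ι : Type*} (Gα : ι → Subgroup G)
    (hnorm : ∀ α, (Gα α).Normal) (hfi : ∀ α, (Gα α).FiniteIndex)
    (htriv : ⨅ α, Gα α = ⊥) (hfil : ⨅ α, (H ⊔ Gα α) = H)
    (N : Subgroup G) (hNH : N ≤ H) (α₀ : ι) (hα₀ : Gα α₀ ⊓ H ≤ N) :
    (⨅ α, (N ⊔ Gα α)) = N ∧
      (letI : N.Normal := normal_of_le_center' N (hNH.trans hcent)
       ResiduallyFinite (G ⧸ N)) :=
  statement1_general H hcent Gα hnorm hfi hfil N hNH α₀ hα₀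
end

section
/- If G is a residually finite group, H ≤ G a central subgroup, and G/H is residually finite, then G admits an H-filtration: there is a family {G_α} of finite-index normal subgroups of G with trivial intersection satisfying ⋂_α H·G_α = H. -/
namespace ResiduallyFinite

variable {G : Type*} [Group G]

theorem iInf_finiteIndexNormalSubgroup_eq_bot (hG : ResiduallyFinite G) :
    ⨅ K : FiniteIndexNormalSubgroup G, (K : Subgroup G) = ⊥ := by
  refine (Subgroup.eq_bot_iff_forall _).mpr fun g hg => ?_
  by_contra hg1
  obtain ⟨N, hN, hNf, hgN⟩ := hG g hg1
  exact hgN (Subgroup.mem_iInf.mp hg (@FiniteIndexNormalSubgroup.mk _ _ N hN hNf))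

/-- For `g ∉ N`, the preimage of a finite-index normal subgroup of `G ⧸ N` missing `gN` is a
finite-index normal subgroup of `G` containing `N` and missing `g`. -/
theorem iInf_sup_finiteIndexNormalSubgroup_eq {N : Subgroup G} [N.Normal]
    (hquot : ResiduallyFinite (G ⧸ N)) :
    ⨅ K : FiniteIndexNormalSubgroup G, (N ⊔ K) = N := by
  refine le_antisymm (fun g hg => ?_) (le_iInf fun _ => le_sup_left)
  by_contra hgN
  have hg1 : (g : G ⧸ N) ≠ 1 := by rwa [Ne, QuotientGroup.eq_one_iff]
  obtain ⟨M, hM, hMf, hgM⟩ := hquot _ hg1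
  let K := FiniteIndexNormalSubgroup.comap (QuotientGroup.mk' N)
    (@FiniteIndexNormalSubgroup.mk _ _ M hM hMf)
  have hNK : N ≤ K := by
    simpa [K, QuotientGroup.ker_mk'] using MonoidHom.ker_le_comap (QuotientGroup.mk' N) M
  have hgK : g ∈ (K : Subgroup G) := sup_eq_right.mpr hNK ▸ Subgroup.mem_iInf.mp hg K
  exact hgM hgK

end ResiduallyFinite

/-- if `G` is residually finite, `H ≤ G` is central and `G/H` is residually
finite, then `G` admits an `H`-filtration: a family of finite-index normal subgroups with
trivial intersection such that `⋂ α, H·G α = H`. -/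
theorem statement2 {G : Type u} [Group G] (hG : ResiduallyFinite G)
    (H : Subgroup G) (hcent : H ≤ Subgroup.center G)
    (hquot : letI : H.Normal := normal_of_le_center' H hcent
             ResiduallyFinite (G ⧸ H)) :
    ∃ (ι : Type u) (Gα : ι → Subgroup G),
      (∀ α, (Gα α).Normal) ∧ (∀ α, (Gα α).FiniteIndex) ∧
      (⨅ α, Gα α) = ⊥ ∧ (⨅ α, (H ⊔ Gα α)) = H := by
  let _ : H.Normal := normal_of_le_center' H hcent
  exact ⟨FiniteIndexNormalSubgroup G, fun K => K, fun K => K.isNormal', fun K => K.isFiniteIndex',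
    hG.iInf_finiteIndexNormalSubgroup_eq_bot, hquot.iInf_sup_finiteIndexNormalSubgroup_eq⟩
end

section
/- Let H ≤ G₁ and H ≤ G₂ be a common central subgroup, G := G₁ ⊗_H G₂ the central product, and suppose G *_H G is residually finite (amalgamated free product of two copies of G over H). Then the amalgamated free product G₁ *_H G₂ is residually finite. -/
variable {H : Type*} {G₁ G₂ : Type u} [Group H] [Group G₁] [Group G₂]

/-- The antidiagonal copy `{(h, h⁻¹) : h ∈ H}` of `H` in `G₁ × G₂` (as the normal subgroup
it generates; when `H` maps into the centers of `G₁` and `G₂` this is exactly the set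
`{(f₁ h, (f₂ h)⁻¹)}`, which is then a central -- hence normal -- subgroup). -/
def centralKer (f₁ : H →* G₁) (f₂ : H →* G₂) : Subgroup (G₁ × G₂) :=
  Subgroup.normalClosure {p : G₁ × G₂ | ∃ h : H, p = (f₁ h, (f₂ h)⁻¹)}

instance centralKer_normal (f₁ : H →* G₁) (f₂ : H →* G₂) : (centralKer f₁ f₂).Normal :=
  Subgroup.normalClosure_normal

/-- The central (tensor) product `G₁ ⊗_H G₂`: the quotient of `G₁ × G₂` by the
antidiagonal copy of `H`. -/
def CentralProduct (f₁ : H →* G₁) (f₂ : H →* G₂) : Type _ :=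
  (G₁ × G₂) ⧸ centralKer f₁ f₂

instance (f₁ : H →* G₁) (f₂ : H →* G₂) : Group (CentralProduct f₁ f₂) :=
  inferInstanceAs (Group ((G₁ × G₂) ⧸ centralKer f₁ f₂))

/-- The canonical map `G₁ → G₁ ⊗_H G₂`. -/
def centralInl (f₁ : H →* G₁) (f₂ : H →* G₂) : G₁ →* CentralProduct f₁ f₂ :=
  (QuotientGroup.mk' (centralKer f₁ f₂)).comp (MonoidHom.inl G₁ G₂)

/-- The canonical map `G₂ → G₁ ⊗_H G₂`. -/
def centralInr (f₁ : H →* G₁) (f₂ : H →* G₂) : G₂ →* CentralProduct f₁ f₂ :=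
  (QuotientGroup.mk' (centralKer f₁ f₂)).comp (MonoidHom.inr G₁ G₂)

/-- The two-element family of groups `{G₁, G₂}`, used to form the amalgamated free
product `G₁ *_H G₂` as `Monoid.PushoutI`. -/
def fam (G₁ G₂ : Type u) : Bool → Type u := fun b => cond b G₁ G₂

instance famGroup (G₁ G₂ : Type u) [Group G₁] [Group G₂] : ∀ b, Group (fam G₁ G₂ b)
  | true => inferInstanceAs (Group G₁)
  | false => inferInstanceAs (Group G₂)

/-- The pair of embeddings of the amalgamated subgroup into the two factors. -/
def famHom {H : Type*} {G₁ G₂ : Type u} [Group H] [Group G₁] [Group G₂]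
    (f₁ : H →* G₁) (f₂ : H →* G₂) : ∀ b, H →* fam G₁ G₂ b
  | true => f₁
  | false => f₂

/-! Since `H` is central, the kernel of `G₁ × G₂ → G` is exactly the antidiagonal
`{(h, h⁻¹)}`. Hence the canonical maps `Gᵢ → G` are injective, and an element of `Gᵢ` whose
image lies in the image of `H` already lies in `H`. A map of amalgams with these two properties
sends reduced words to reduced words, so by the normal form theorem for amalgamated products
`G₁ *_H G₂ → G *_H G` is injective, and residual finiteness passes to subgroups. -/

open Monoid Function

theorem ResiduallyFinite.of_injective {G K : Type*} [Group G] [Group K] {f : G →* K}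
    (hf : Injective f) (hK : ResiduallyFinite K) : ResiduallyFinite G := by
  intro g hg
  obtain ⟨N, _, _, hgN⟩ := hK (f g) ((injective_iff_map_eq_one' f).mp hf g |>.not.mpr hg)
  let M := FiniteIndexNormalSubgroup.comap f (.ofSubgroup N)
  exact ⟨M, M.isNormal', M.isFiniteIndex', hgN⟩

namespace Monoid.CoprodI.Word

variable {ι : Type*} {G G' : ι → Type*} [∀ i, Monoid (G i)] [∀ i, Monoid (G' i)]

def map (f : ∀ i, G i →* G' i) (hf : ∀ i, Injective (f i)) (w : Word G) : Word G' where
  toList := w.toList.map fun l => ⟨l.1, f l.1 l.2⟩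
  ne_one := by
    simp only [List.mem_map]
    rintro _ ⟨l, hl, rfl⟩ h1
    exact w.ne_one l hl ((hf l.1).eq_iff.mp (h1.trans (map_one _).symm))
  chain_ne := by rw [List.isChain_map]; exact w.chain_ne

theorem map_eq_empty_iff (f : ∀ i, G i →* G' i) (hf : ∀ i, Injective (f i)) (w : Word G) :
    w.map f hf = empty ↔ w = empty := by
  simp [map, empty, Word.ext_iff]

end Monoid.CoprodI.Word

namespace Monoid.PushoutI

variable {ι H : Type*} {G G' : ι → Type*} [Group H] [∀ i, Group (G i)] [∀ i, Group (G' i)]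
  {φ : ∀ i, H →* G i} {ψ : ∀ i, H →* G' i}

def map (f : ∀ i, G i →* G' i) (hf : ∀ i, (f i).comp (φ i) = ψ i) :
    PushoutI φ →* PushoutI ψ :=
  lift (fun i => (of i).comp (f i)) (base ψ) fun i => by
    rw [MonoidHom.comp_assoc, hf i, of_comp_eq_base]

@[simp]
theorem map_of (f : ∀ i, G i →* G' i) (hf : ∀ i, (f i).comp (φ i) = ψ i) {i : ι} (g : G i) :
    map f hf (of i g) = of i (f i g) :=
  lift_of _ _ _ g

@[simp]
theorem map_base (f : ∀ i, G i →* G' i) (hf : ∀ i, (f i).comp (φ i) = ψ i) (h : H) :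
    map f hf (base φ h) = base ψ h :=
  lift_base _ _ _ h

theorem NormalWord.Transversal.eq_one_of_mem_range_of_mem_set (d : NormalWord.Transversal φ)
    {i : ι} {g : G i} (hφ : g ∈ (φ i).range) (hd : g ∈ d.set i) : g = 1 := by
  have := (d.compl i).1 (a₁ := (⟨g, hφ⟩, ⟨1, d.one_mem i⟩)) (a₂ := (⟨1, (φ i).range.one_mem⟩, ⟨g, hd⟩))
    (by simp)
  simpa using congrArg (fun p => p.1.1) this

theorem exists_eq_base_mul_reduced (hφ : ∀ i, Injective (φ i)) (x : PushoutI φ) :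
    ∃ (h : H) (w : CoprodI.Word G), Reduced φ w ∧ x = base φ h * ofCoprodI w.prod := by
  classical
  obtain ⟨d⟩ := NormalWord.transversal_nonempty φ hφ
  let w : NormalWord d := NormalWord.equiv x
  refine ⟨w.head, w.toWord, fun ⟨i, g⟩ hg hgφ => ?_, (NormalWord.equiv.symm_apply_apply x).symm⟩
  exact w.ne_one _ hg (d.eq_one_of_mem_range_of_mem_set hgφ (w.normalized i g hg))

theorem map_ofCoprodI_prod (f : ∀ i, G i →* G' i) (hf : ∀ i, (f i).comp (φ i) = ψ i)
    (hfi : ∀ i, Injective (f i)) (w : CoprodI.Word G) :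
    map f hf (ofCoprodI w.prod) = ofCoprodI (w.map f hfi).prod := by
  simp [CoprodI.Word.map, CoprodI.Word.prod, map_list_prod, Function.comp_def]

theorem Reduced.map {f : ∀ i, G i →* G' i} {hfi : ∀ i, Injective (f i)}
    (hrange : ∀ i (g : G i), f i g ∈ (ψ i).range → g ∈ (φ i).range)
    {w : CoprodI.Word G} (hw : Reduced φ w) : Reduced ψ (w.map f hfi) := by
  simp only [Reduced, CoprodI.Word.map, List.mem_map]
  rintro _ ⟨l, hl, rfl⟩ hψ
  exact hw l hl (hrange _ _ hψ)

theorem map_injective (hφ : ∀ i, Injective (φ i)) (hψ : ∀ i, Injective (ψ i))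
    {f : ∀ i, G i →* G' i} (hf : ∀ i, (f i).comp (φ i) = ψ i) (hfi : ∀ i, Injective (f i))
    (hrange : ∀ i (g : G i), f i g ∈ (ψ i).range → g ∈ (φ i).range) :
    Injective (map f hf) := by
  refine (injective_iff_map_eq_one _).mpr fun x hx => ?_
  obtain ⟨h, w, hw, rfl⟩ := exists_eq_base_mul_reduced hφ x
  rw [map_mul, map_base, map_ofCoprodI_prod f hf hfi] at hx
  have hmem : ofCoprodI (w.map f hfi).prod ∈ (base ψ).range :=
    ⟨h⁻¹, by rw [map_inv, inv_eq_of_mul_eq_one_right hx]⟩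
  have hw'_empty := (hw.map hrange).eq_empty_of_mem_range hψ hmem
  rw [hw'_empty, CoprodI.Word.prod_empty, map_one, mul_one, ← map_one (base ψ)] at hx
  rw [(CoprodI.Word.map_eq_empty_iff f hfi w).mp hw'_empty, base_injective hψ hx]
  simp

end Monoid.PushoutI

section CentralProduct

variable (f₁ : H →* G₁) (f₂ : H →* G₂)

def centralAntidiag (hc₂ : f₂.range ≤ Subgroup.center G₂) : H →* G₁ × G₂ where
  toFun h := (f₁ h, (f₂ h)⁻¹)
  map_one' := by simp
  map_mul' a b := by
    have hab : f₂ b * f₂ a = f₂ a * f₂ b := Subgroup.mem_center_iff.mp (hc₂ ⟨a, rfl⟩) (f₂ b)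
    simp only [map_mul, ← hab, mul_inv_rev, Prod.mk_mul_mk]

variable {f₁ f₂}

theorem centralKer_eq_range (hc₁ : f₁.range ≤ Subgroup.center G₁)
    (hc₂ : f₂.range ≤ Subgroup.center G₂) :
    centralKer f₁ f₂ = (centralAntidiag f₁ f₂ hc₂).range := by
  have hcenter : (centralAntidiag f₁ f₂ hc₂).range ≤ Subgroup.center (G₁ × G₂) := by
    rintro _ ⟨h, rfl⟩
    refine Subgroup.mem_center_iff.mpr fun q => Prod.ext ?_ ?_
    · exact Subgroup.mem_center_iff.mp (hc₁ ⟨h, rfl⟩) q.1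
    · exact Subgroup.mem_center_iff.mp (inv_mem (hc₂ ⟨h, rfl⟩)) q.2
  have := normal_of_le_center' _ hcenter
  refine le_antisymm (Subgroup.normalClosure_le_normal ?_) ?_
  · rintro _ ⟨h, rfl⟩
    exact ⟨h, rfl⟩
  · rintro _ ⟨h, rfl⟩
    exact Subgroup.subset_normalClosure ⟨h, rfl⟩

theorem centralInl_mul_centralInr_eq_one_iff (hc₁ : f₁.range ≤ Subgroup.center G₁)
    (hc₂ : f₂.range ≤ Subgroup.center G₂) {a : G₁} {b : G₂} :
    centralInl f₁ f₂ a * centralInr f₁ f₂ b = 1 ↔ ∃ h, f₁ h = a ∧ (f₂ h)⁻¹ = b := by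
  change QuotientGroup.mk' (centralKer f₁ f₂) ((a, 1) * (1, b)) = 1 ↔ _
  rw [QuotientGroup.mk'_apply, QuotientGroup.eq_one_iff, centralKer_eq_range hc₁ hc₂]
  simp [centralAntidiag, Prod.ext_iff]

theorem centralInl_injective (hf₂ : Injective f₂) (hc₁ : f₁.range ≤ Subgroup.center G₁)
    (hc₂ : f₂.range ≤ Subgroup.center G₂) : Injective (centralInl f₁ f₂) := by
  refine (injective_iff_map_eq_one _).mpr fun a ha => ?_
  obtain ⟨h, rfl, hh⟩ := (centralInl_mul_centralInr_eq_one_iff hc₁ hc₂).mp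
    (show centralInl f₁ f₂ a * centralInr f₁ f₂ 1 = 1 by rw [ha, map_one, one_mul])
  rw [inv_eq_one, ← map_one f₂, hf₂.eq_iff] at hh
  rw [hh, map_one]

theorem centralInr_injective (hf₁ : Injective f₁) (hc₁ : f₁.range ≤ Subgroup.center G₁)
    (hc₂ : f₂.range ≤ Subgroup.center G₂) : Injective (centralInr f₁ f₂) := by
  refine (injective_iff_map_eq_one _).mpr fun b hb => ?_
  obtain ⟨h, hh, rfl⟩ := (centralInl_mul_centralInr_eq_one_iff hc₁ hc₂).mp
    (show centralInl f₁ f₂ 1 * centralInr f₁ f₂ b = 1 by rw [hb, map_one, one_mul])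
  rw [← map_one f₁, hf₁.eq_iff] at hh
  rw [hh, map_one, inv_one]

theorem centralInr_comp_eq_centralInl_comp :
    (centralInr f₁ f₂).comp f₂ = (centralInl f₁ f₂).comp f₁ := by
  ext h
  exact QuotientGroup.eq.mpr (Subgroup.subset_normalClosure ⟨h, by simp⟩)

theorem mem_range_of_centralInr_mem_range (hc₁ : f₁.range ≤ Subgroup.center G₁)
    (hc₂ : f₂.range ≤ Subgroup.center G₂) {b : G₂}
    (hb : centralInr f₁ f₂ b ∈ ((centralInl f₁ f₂).comp f₁).range) : b ∈ f₂.range := by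
  obtain ⟨h, hh⟩ := hb
  obtain ⟨k, -, rfl⟩ := (centralInl_mul_centralInr_eq_one_iff hc₁ hc₂).mp
    (show centralInl f₁ f₂ (f₁ h)⁻¹ * centralInr f₁ f₂ b = 1 by
      rw [map_inv, ← hh, MonoidHom.comp_apply, inv_mul_cancel])
  exact ⟨k⁻¹, map_inv f₂ k⟩

variable (f₁ f₂)

def centralProductFamHom :
    ∀ b, fam G₁ G₂ b →* fam (CentralProduct f₁ f₂) (CentralProduct f₁ f₂) b
  | true => centralInl f₁ f₂
  | false => centralInr f₁ f₂

end CentralProduct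

/-- let `H` be a common central subgroup of `G₁` and `G₂`, and
`G := G₁ ⊗_H G₂` the central product, into which `H` embeds via the common image of its
two copies. If the amalgamated free product `G *_H G` is residually finite, then so is
`G₁ *_H G₂`. -/
theorem statement8 (f₁ : H →* G₁) (f₂ : H →* G₂)
    (hf₁ : Function.Injective f₁) (hf₂ : Function.Injective f₂)
    (hc₁ : f₁.range ≤ Subgroup.center G₁) (hc₂ : f₂.range ≤ Subgroup.center G₂)
    (hRF : ResiduallyFinite (Monoid.PushoutI
      (G := fam (CentralProduct f₁ f₂) (CentralProduct f₁ f₂))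
      (famHom ((centralInl f₁ f₂).comp f₁) ((centralInl f₁ f₂).comp f₁)))) :
    ResiduallyFinite (Monoid.PushoutI (G := fam G₁ G₂) (famHom f₁ f₂)) := by
  set g := (centralInl f₁ f₂).comp f₁
  have hinl := centralInl_injective hf₂ hc₁ hc₂
  have hinr := centralInr_injective hf₁ hc₁ hc₂
  have hcomp : ∀ b, (centralProductFamHom f₁ f₂ b).comp (famHom f₁ f₂ b) = famHom g g b
    | true => rfl
    | false => centralInr_comp_eq_centralInl_comp
  refine hRF.of_injective (PushoutI.map_injective ?_ ?_ hcomp ?_ ?_)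
  · rintro (_ | _)
    exacts [hf₂, hf₁]
  · rintro (_ | _) <;> exact hinl.comp hf₁
  · rintro (_ | _)
    exacts [hinr, hinl]
  · rintro (_ | _) x hx
    · exact mem_range_of_centralInr_mem_range hc₁ hc₂ hx
    · obtain ⟨h, hh⟩ := hx
      exact ⟨h, hinl hh⟩
end
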